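/- arXiv:1604.00498 — 3 statements merged into one kernel-verified Lean document; each statement's English description precedes it below -/
import Mathlib

section
/- Let r_i, r_j be distinct points in a horizontal plane at horizontal distance s apart, both on a circle of radius a centered at c in that plane (so s ≤ 2a), and let T be the upward apex of the equilateral triangle on [r_i, r_j]. If a point p lies on the segment [r_i, T] at distance δ ∈ [0, s] from r_i, then the horizontal distance from p to c is at most √(a² − (s² − (s−δ)²)/4). -/
noncomputable section

abbrev E3 := EuclideanSpace ℝ (Fin 3)

/-- Unit vector in the positive `z` direction. -/
def ez : E3 := EuclideanSpace.single 2 1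

/-- Distance between the horizontal (xy) projections of two points. -/
def distHoriz (p q : E3) : ℝ := Real.sqrt ((p 0 - q 0)^2 + (p 1 - q 1)^2)

/-- `x` lies on the lateral surface of the right circular cone with vertex `V`,
axis parallel to the z-axis and semi-vertical angle `45°`. -/
def onCone (V x : E3) : Prop := distHoriz x V = V 2 - x 2

section LineMap

variable {V P : Type*} [NormedAddCommGroup V] [InnerProductSpace ℝ V] [MetricSpace P]
  [NormedAddTorsor V P]

theorem dist_lineMap_sq (x y c : P) (t : ℝ) :
    dist (AffineMap.lineMap x y t) c ^ 2 =
      (1 - t) * dist x c ^ 2 + t * dist y c ^ 2 - t * (1 - t) * dist x y ^ 2 := by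
  have hvec : AffineMap.lineMap x y t -ᵥ c = (1 - t) • (x -ᵥ c) + t • (y -ᵥ c) := by
    rw [AffineMap.lineMap_apply, vadd_vsub_assoc, ← vsub_sub_vsub_cancel_right y x c]
    module
  have hxy : y -ᵥ x = (y -ᵥ c) - (x -ᵥ c) := (vsub_sub_vsub_cancel_right y x c).symm
  rw [dist_eq_norm_vsub V, hvec, dist_eq_norm_vsub V, dist_eq_norm_vsub V, dist_comm,
    dist_eq_norm_vsub V, hxy, norm_add_sq_real, norm_sub_sq_real, norm_smul, norm_smul,
    real_inner_smul_left, real_inner_smul_right, real_inner_comm (y -ᵥ c)]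
  simp only [Real.norm_eq_abs, mul_pow, sq_abs]
  ring

theorem dist_lineMap_sq_of_dist_eq (x y c : P) {a : ℝ} (hx : dist x c = a) (hy : dist y c = a)
    (t : ℝ) : dist (AffineMap.lineMap x y t) c ^ 2 = a ^ 2 - t * (1 - t) * dist x y ^ 2 := by
  rw [dist_lineMap_sq, hx, hy]
  ring

end LineMap

def horiz : E3 →ₗ[ℝ] EuclideanSpace ℝ (Fin 2) where
  toFun x := !₂[x 0, x 1]
  map_add' x y := by ext i; fin_cases i <;> simp
  map_smul' r x := by ext i; fin_cases i <;> simp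

theorem horiz_ez : horiz ez = 0 := by
  ext i; fin_cases i <;> simp [horiz, ez]

theorem distHoriz_eq_dist_horiz (p q : E3) : distHoriz p q = dist (horiz p) (horiz q) := by
  simp [distHoriz, EuclideanSpace.dist_eq, Fin.sum_univ_two, horiz, Real.dist_eq, sq_abs]

theorem dist_eq_dist_horiz_of_apply_two_eq (p q : E3) (h : p 2 = q 2) :
    dist p q = dist (horiz p) (horiz q) := by
  rw [← distHoriz_eq_dist_horiz, distHoriz, EuclideanSpace.dist_eq, Fin.sum_univ_three]
  simp [Real.dist_eq, sq_abs, h]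

/-- Seen from above, moving the fraction `r` of the way from `x` towards the apex of an upright
triangle on `[x, y]` moves the fraction `r / 2` along the base. -/
theorem horiz_add_smul_apex_sub (x y : E3) (r h : ℝ) :
    horiz (x + r • (midpoint ℝ x y + h • ez - x)) =
      AffineMap.lineMap (horiz x) (horiz y) (r / 2) := by
  rw [AffineMap.lineMap_apply_module', map_add, map_smul, map_sub, map_add, map_smul, horiz_ez,
    midpoint_eq_smul_add, map_smul, map_add, invOf_eq_inv]
  module

theorem stmt4_general (c ri rj T p : E3) (a s δ : ℝ)
    (hzi : ri 2 = c 2) (hzj : rj 2 = c 2) (hne : ri ≠ rj)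
    (hri : dist ri c = a) (hrj : dist rj c = a)
    (hs : s = dist ri rj)
    (hT : T = midpoint ℝ ri rj + (s * Real.sqrt 3 / 2) • ez)
    (hp : p = ri + (δ / s) • (T - ri)) :
    distHoriz p c ≤ Real.sqrt (a ^ 2 - (s ^ 2 - (s - δ) ^ 2) / 4) := by
  have hs0 : s ≠ 0 := hs ▸ (dist_pos.2 hne).ne'
  rw [dist_eq_dist_horiz_of_apply_two_eq _ _ hzi] at hri
  rw [dist_eq_dist_horiz_of_apply_two_eq _ _ hzj] at hrj
  rw [dist_eq_dist_horiz_of_apply_two_eq _ _ (hzi.trans hzj.symm)] at hs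
  have hph : horiz p = AffineMap.lineMap (horiz ri) (horiz rj) (δ / s / 2) := by
    rw [hp, hT, horiz_add_smul_apex_sub]
  refine le_of_eq ?_
  rw [distHoriz_eq_dist_horiz, ← Real.sqrt_sq dist_nonneg, hph,
    dist_lineMap_sq_of_dist_eq _ _ _ hri hrj, ← hs]
  congr 1
  field_simp
  ring

/-- If `r_i, r_j` lie on a circle of radius `a` centred at `c` in a horizontal plane
and a point moves distance `δ ∈ [0, s]` from `r_i` along the side `[r_i, T]` of the
upward equilateral triangle, its horizontal distance from `c` is at most
`√(a² − (s² − (s−δ)²)/4)`. -/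
theorem stmt4 (c ri rj T p : E3) (a s δ : ℝ)
    (hzi : ri 2 = c 2) (hzj : rj 2 = c 2) (hne : ri ≠ rj)
    (hri : dist ri c = a) (hrj : dist rj c = a)
    (hs : s = dist ri rj)
    (hT : T = midpoint ℝ ri rj + (s * Real.sqrt 3 / 2) • ez)
    (hδ0 : 0 ≤ δ) (hδs : δ ≤ s) (hp : p = ri + (δ / s) • (T - ri)) :
    distHoriz p c ≤ Real.sqrt (a ^ 2 - (s ^ 2 - (s - δ) ^ 2) / 4) :=
  stmt4_general c ri rj T p a s δ hzi hzj hne hri hrj hs hT hp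
end
end

section
/- Let T be the upward apex of the equilateral triangle on a horizontal segment [r_i, r_j] in ℝ³. If p = r_i + t(T − r_i) and q = r_j + t'(T − r_j) with t, t' ∈ [0,1], and p and q lie in a common horizontal plane, then t = t', p and q lie in that plane at distance (1 − t)·dist(r_i,r_j), and the upward apex of the equilateral triangle on [p, q] equals T. -/
noncomputable section

/-- Invariance of the apex: if two points move along the two non-horizontal sides of
the upward equilateral triangle and lie in a common horizontal plane, then they have
moved by the same parameter, are at distance `(1-t)·s`, and the upward equilateral
triangle built on them has the same apex `T`. -/
theorem stmt5 (ri rj T p q : E3) (s t t' : ℝ) (hne : ri ≠ rj) (hz : ri 2 = rj 2)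
    (hs : s = dist ri rj)
    (hT : T = midpoint ℝ ri rj + (s * Real.sqrt 3 / 2) • ez)
    (ht : t ∈ Set.Icc (0:ℝ) 1) (ht' : t' ∈ Set.Icc (0:ℝ) 1)
    (hp : p = ri + t • (T - ri)) (hq : q = rj + t' • (T - rj))
    (hplane : p 2 = q 2) :
    t = t' ∧ dist p q = (1 - t) * s ∧
      midpoint ℝ p q + (dist p q * Real.sqrt 3 / 2) • ez = T := by
  have hs0 : 0 < s := hs ▸ dist_pos.mpr hne
  have h3 : 0 < Real.sqrt 3 := by positivity
  have hez : ez 2 = 1 := by simp [ez, EuclideanSpace.single_apply]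
  have hT2 : T 2 = ri 2 + s * Real.sqrt 3 / 2 := by
    simp [hT, midpoint_eq_smul_add, PiLp.add_apply, PiLp.smul_apply, hez, hz]
    ring
  have hp2 : p 2 = ri 2 + t * (s * Real.sqrt 3 / 2) := by
    simp [hp, PiLp.add_apply, PiLp.smul_apply, PiLp.sub_apply, hT2]
  have hq2 : q 2 = rj 2 + t' * (s * Real.sqrt 3 / 2) := by
    have hT2' : T 2 = rj 2 + s * Real.sqrt 3 / 2 := by rw [hT2, hz]
    simp [hq, PiLp.add_apply, PiLp.smul_apply, PiLp.sub_apply, hT2']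
  have htt : t = t' := by
    rw [hp2, hq2, hz] at hplane
    have := mul_right_cancel₀ (by positivity : (s * Real.sqrt 3 / 2) ≠ 0) (by linarith : t * (s * Real.sqrt 3 / 2) = t' * (s * Real.sqrt 3 / 2))
    exact this
  subst htt
  have hpq : p - q = (1 - t) • (ri - rj) := by
    rw [hp, hq]
    module
  have hdist : dist p q = (1 - t) * s := by
    rw [dist_eq_norm, hpq, norm_smul, Real.norm_eq_abs, abs_of_nonneg (by linarith [ht.2]), hs, dist_eq_norm]
  refine ⟨rfl, hdist, ?_⟩
  have hmideq : ∀ a b : E3, midpoint ℝ a b = (2:ℝ)⁻¹ • (a + b) := fun a b => by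
    rw [midpoint_eq_smul_add, invOf_eq_inv]
  have hmid : midpoint ℝ p q = midpoint ℝ ri rj + (t * (s * Real.sqrt 3 / 2)) • ez := by
    rw [hp, hq, hT, hmideq, hmideq]
    module
  rw [hdist, hmid, hT]
  module
end
end

section
/- Let p be a point on a circle of radius a > 0 centered at c in a horizontal plane and V = c + a·e_z. If x is a point on the segment [p, V] at distance at least δ from p with 0 < δ ≤ a√2, then the horizontal distance of x from c is at most a − δ/√2; in particular, this horizontal distance is strictly less than a. -/
noncomputable section

/-! Write `x = lineMap p V t` with `t ∈ [0, 1]`. Since `V` lies directly above `c`, the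
horizontal distance from `c` shrinks linearly along the generator, to `(1 - t) a`, while the
slant height is `|p - V| = a√2`, so `δ ≤ |p - x| = t a√2` forces `t a ≥ δ/√2`. -/

theorem dist_sq_eq_distHoriz_sq_add_sq (p q : E3) :
    dist p q ^ 2 = distHoriz p q ^ 2 + (p 2 - q 2) ^ 2 := by
  rw [EuclideanSpace.dist_sq_eq, Fin.sum_univ_three, distHoriz, Real.sq_sqrt (by positivity)]
  simp only [Real.dist_eq, sq_abs]

theorem distHoriz_eq_dist_of_apply_two_eq {p q : E3} (h : p 2 = q 2) :
    distHoriz p q = dist p q := by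
  have hsq := dist_sq_eq_distHoriz_sq_add_sq p q
  rw [h, sub_self, zero_pow two_ne_zero, add_zero] at hsq
  exact ((pow_left_inj₀ dist_nonneg (Real.sqrt_nonneg _) two_ne_zero).1 hsq).symm

theorem distHoriz_lineMap_of_apply_eq (p : E3) {q r : E3} (h0 : q 0 = r 0) (h1 : q 1 = r 1)
    (t : ℝ) : distHoriz (AffineMap.lineMap p q t) r = |1 - t| * distHoriz p r := by
  have hcoord : ∀ i, q i = r i →
      (AffineMap.lineMap p q t : E3) i - r i = (1 - t) * (p i - r i) := by
    intro i hi
    rw [AffineMap.lineMap_apply_module, PiLp.add_apply, PiLp.smul_apply, PiLp.smul_apply, hi,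
      smul_eq_mul, smul_eq_mul]
    ring
  rw [distHoriz, distHoriz, hcoord 0 h0, hcoord 1 h1, mul_pow, mul_pow, ← mul_add,
    Real.sqrt_mul (sq_nonneg _), Real.sqrt_sq_eq_abs]

theorem add_smul_ez_apply (c : E3) (a : ℝ) :
    (c + a • ez) 0 = c 0 ∧ (c + a • ez) 1 = c 1 ∧ (c + a • ez) 2 = c 2 + a := by
  simp [ez]

theorem dist_add_smul_ez_eq_mul_sqrt_two {c p : E3} {a : ℝ} (hpc : dist p c = a)
    (hpz : p 2 = c 2) :
    dist p (c + a • ez) = a * Real.sqrt 2 := by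
  obtain ⟨hV0, hV1, hV2⟩ := add_smul_ez_apply c a
  have hhoriz : distHoriz p (c + a • ez) = a :=
    calc distHoriz p (c + a • ez) = distHoriz p c := by rw [distHoriz, distHoriz, hV0, hV1]
      _ = a := by rw [distHoriz_eq_dist_of_apply_two_eq hpz, hpc]
  have hsq := dist_sq_eq_distHoriz_sq_add_sq p (c + a • ez)
  rw [hhoriz, hV2, hpz] at hsq
  have ha : 0 ≤ a := hpc ▸ dist_nonneg
  rw [← Real.sqrt_sq dist_nonneg, hsq, show a ^ 2 + (c 2 - (c 2 + a)) ^ 2 = a ^ 2 * 2 by ring,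
    Real.sqrt_mul (sq_nonneg a), Real.sqrt_sq ha]

theorem stmt10_general (c p V x : E3) (a δ : ℝ)
    (hpc : dist p c = a) (hpz : p 2 = c 2) (hV : V = c + a • ez)
    (hx : x ∈ segment ℝ p V) (hδ0 : 0 < δ)
    (hmoved : δ ≤ dist p x) :
    distHoriz x c ≤ a - δ / Real.sqrt 2 ∧ distHoriz x c < a := by
  rw [segment_eq_image_lineMap] at hx
  obtain ⟨t, ⟨ht0, ht1⟩, rfl⟩ := hx
  subst hV
  obtain ⟨hV0, hV1, -⟩ := add_smul_ez_apply c a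
  have hslant : dist p (c + a • ez) = a * Real.sqrt 2 := dist_add_smul_ez_eq_mul_sqrt_two hpc hpz
  have hhoriz : distHoriz (AffineMap.lineMap p (c + a • ez) t) c = (1 - t) * a := by
    rw [distHoriz_lineMap_of_apply_eq p hV0 hV1, abs_of_nonneg (sub_nonneg.2 ht1),
      distHoriz_eq_dist_of_apply_two_eq hpz, hpc]
  rw [dist_left_lineMap, hslant, Real.norm_of_nonneg ht0] at hmoved
  have hclimb : δ / Real.sqrt 2 ≤ t * a := by
    rw [div_le_iff₀ (by positivity)]
    linarith
  have hgain : 0 < δ / Real.sqrt 2 := by positivity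
  constructor <;> linarith

/-- A point of the segment `[p, V]` at distance at least `δ` from the base point `p`
has horizontal distance from `c` at most `a − δ/√2`, in particular strictly less
than `a`. -/
theorem stmt10 (c p V x : E3) (a δ : ℝ) (ha : 0 < a)
    (hpc : dist p c = a) (hpz : p 2 = c 2) (hV : V = c + a • ez)
    (hx : x ∈ segment ℝ p V) (hδ0 : 0 < δ) (hδ : δ ≤ a * Real.sqrt 2)
    (hmoved : δ ≤ dist p x) :
    distHoriz x c ≤ a - δ / Real.sqrt 2 ∧ distHoriz x c < a :=
  stmt10_general c p V x a δ hpc hpz hV hx hδ0 hmoved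
end
end
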